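/- Let r be an odd prime, let n be a positive integer with n < r, and let (a_1, …, a_r) be an r-tuple of nonnegative integers with a_1 + ⋯ + a_r = n. Suppose the r multinomial coefficients C(n−1; a_1, …, a_k − 1, …, a_r), for 1 ≤ k ≤ r, do not all lie in a single residue class modulo r. Then for each residue s modulo r, the number of distinct r-tuples b obtained by permuting the entries of (a_1, …, a_r) and satisfying S(b) ≡ s (mod r) is the same for every s; namely, each such count equals (r−1)!/Π_v m_v!, where m_v is the number of indices k with a_k = v. -/

import Mathlib

/-- Multinomial coefficient of an integer tuple; by convention `0` if any entry is negative. -/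
def multinomialZ {r : ℕ} (a : Fin r → ℤ) : ℕ :=
  if ∀ i, 0 ≤ a i then Nat.multinomial Finset.univ (fun i => (a i).toNat) else 0

/-- The multinomial coefficient in which entry `k` is decreased by 1. -/
def sub1 {r : ℕ} (a : Fin r → ℕ) (k : Fin r) : ℕ :=
  multinomialZ (fun i => (a i : ℤ) - if i = k then 1 else 0)

/-- `S(a) = ∑_{k=1}^{r-1} k ⬝ C(n-1; a_1, …, a_{k+1} - 1, …, a_r)`; here indices are
`0`-based so the `(k+1)`-st part is the entry at index `k`, and the `k = 0` term vanishes. -/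
def S {r : ℕ} (a : Fin r → ℕ) : ℕ :=
  ∑ k : Fin r, (k : ℕ) * sub1 a k

open Finset

section Aux

lemma multinomial_comp {r : ℕ} (f : Fin r → ℕ) (e : Equiv.Perm (Fin r)) :
    Nat.multinomial Finset.univ (f ∘ e) = Nat.multinomial Finset.univ f := by
  unfold Nat.multinomial
  simp only [Function.comp_apply]
  rw [Equiv.sum_comp e f, Equiv.prod_comp e (fun i => (f i).factorial)]

lemma multinomialZ_comp {r : ℕ} (f : Fin r → ℤ) (e : Equiv.Perm (Fin r)) :
    multinomialZ (f ∘ ⇑e) = multinomialZ f := by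
  unfold multinomialZ
  simp only [Function.comp_apply]
  by_cases hpos : ∀ i, 0 ≤ f i
  · rw [if_pos hpos, if_pos (fun i => hpos (e i))]
    exact multinomial_comp (fun i => (f i).toNat) e
  · rw [if_neg, if_neg hpos]
    intro hc
    exact hpos fun j => by simpa using hc (e.symm j)

lemma sub1_comp {r : ℕ} (a : Fin r → ℕ) (e : Equiv.Perm (Fin r)) (k : Fin r) :
    sub1 (a ∘ ⇑e) k = sub1 a (e k) := by
  unfold sub1
  have : (fun i => ((a ∘ ⇑e) i : ℤ) - if i = k then 1 else 0)
      = (fun j => (a j : ℤ) - if j = e k then 1 else 0) ∘ ⇑e := by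
    funext i
    simp only [Function.comp_apply, EmbeddingLike.apply_eq_iff_eq]
  rw [this, multinomialZ_comp]

lemma sub1_of_pos {r : ℕ} (a : Fin r → ℕ) (k : Fin r) (hk : 1 ≤ a k) :
    sub1 a k = Nat.multinomial Finset.univ (Function.update a k (a k - 1)) := by
  unfold sub1 multinomialZ
  rw [if_pos]
  · congr 1
    funext i
    by_cases hik : i = k
    · subst hik; simp
    · simp [hik, Function.update_of_ne hik]
  · intro i
    by_cases hik : i = k
    · subst hik; simp; omega
    · simp [hik]

lemma sub1_of_zero {r : ℕ} (a : Fin r → ℕ) (k : Fin r) (hk : a k = 0) :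
    sub1 a k = 0 := by
  unfold sub1 multinomialZ
  rw [if_neg]
  push_neg
  exact ⟨k, by simp [hk]⟩

lemma sub1_mul {r n : ℕ} (a : Fin r → ℕ) (h : ∑ i, a i = n) (k : Fin r) :
    sub1 a k * ∏ i, (a i).factorial = (n - 1).factorial * a k := by
  rcases Nat.eq_zero_or_pos (a k) with hk | hk
  · rw [sub1_of_zero a k hk, hk]; ring
  · set a' := Function.update a k (a k - 1) with ha'
    have hak : a k ≤ n := h ▸ Finset.single_le_sum (fun i _ => Nat.zero_le _) (mem_univ k)
    have hsum' : ∑ i, a' i = n - 1 := by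
      rw [ha', Finset.sum_update_of_mem (mem_univ k)]
      have := Finset.add_sum_erase univ a (mem_univ k)
      simp only [Finset.erase_eq] at this ⊢
      omega
    have hprod : ∏ i, (a i).factorial = a k * ∏ i, (a' i).factorial := by
      rw [← Finset.mul_prod_erase univ (fun i => (a i).factorial) (mem_univ k),
        ← Finset.mul_prod_erase univ (fun i => (a' i).factorial) (mem_univ k)]
      have h1 : ∏ i ∈ univ.erase k, (a i).factorial = ∏ i ∈ univ.erase k, (a' i).factorial :=
        Finset.prod_congr rfl fun i hi => by
          rw [ha', Function.update_of_ne (Finset.mem_erase.1 hi).1]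
      rw [h1, ha', Function.update_self, ← mul_assoc]
      congr 1
      exact (Nat.mul_factorial_pred hk.ne').symm
    rw [sub1_of_pos a k hk, ← ha', hprod, mul_comm (a k) (∏ i, (a' i).factorial),
      ← mul_assoc, mul_comm (Nat.multinomial univ a') (∏ i, (a' i).factorial),
      Nat.multinomial_spec, hsum']

lemma sum_sub1 {r n : ℕ} (a : Fin r → ℕ) (h : ∑ i, a i = n) (hn : 0 < n) :
    ∑ k, sub1 a k = Nat.multinomial Finset.univ a := by
  have hP : 0 < ∏ i, (a i).factorial := Finset.prod_pos fun i _ => Nat.factorial_pos _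
  apply Nat.eq_of_mul_eq_mul_right hP
  rw [Finset.sum_mul]
  calc ∑ k, sub1 a k * ∏ i, (a i).factorial
      = ∑ k, (n - 1).factorial * a k := Finset.sum_congr rfl fun k _ => sub1_mul a h k
    _ = (n - 1).factorial * n := by rw [← Finset.mul_sum, h]
    _ = Nat.multinomial univ a * ∏ i, (a i).factorial := by
        rw [mul_comm ((n-1).factorial) n, Nat.mul_factorial_pred hn.ne',
          mul_comm (Nat.multinomial univ a) _, Nat.multinomial_spec, h]

lemma S_cast {r m : ℕ} (b : Fin r → ℕ) :
    ((S b : ℕ) : ZMod m) = ∑ k : Fin r, ((k : ℕ) : ZMod m) * (sub1 b k : ZMod m) := by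
  unfold S
  push_cast
  rfl

lemma S_shift {r n : ℕ} [NeZero r] (b : Fin r → ℕ) (hb : ∑ i, b i = n) (hn : 0 < n) :
    ((S (b ∘ ⇑(Equiv.addRight (1 : Fin r))) : ℕ) : ZMod r)
      = (S b : ZMod r) - (Nat.multinomial Finset.univ b : ZMod r) := by
  set c : Equiv.Perm (Fin r) := Equiv.addRight (1 : Fin r) with hc
  have hval : ∀ k : Fin r, (((c k : Fin r) : ℕ) : ZMod r) = ((k : ℕ) : ZMod r) + 1 := by
    intro k
    have h1 : ((c k : Fin r) : ℕ) = ((k : ℕ) + (1 : Fin r).val) % r := by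
      rw [hc]; simp [Equiv.coe_addRight, Fin.val_add]
    rw [h1, ZMod.natCast_mod]
    push_cast
    simp [Fin.val_one', ZMod.natCast_mod]
  rw [S_cast, S_cast]
  calc ∑ k : Fin r, ((k : ℕ) : ZMod r) * (sub1 (b ∘ ⇑c) k : ZMod r)
      = ∑ k : Fin r, ((((c k : Fin r) : ℕ) : ZMod r) - 1) * (sub1 b (c k) : ZMod r) := by
        refine Finset.sum_congr rfl fun k _ => ?_
        rw [sub1_comp b c k, hval k]
        ring_nf
    _ = ∑ j : Fin r, (((j : ℕ) : ZMod r) - 1) * (sub1 b j : ZMod r) :=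
        Equiv.sum_comp c (fun j => (((j : ℕ) : ZMod r) - 1) * (sub1 b j : ZMod r))
    _ = (∑ j : Fin r, ((j : ℕ) : ZMod r) * (sub1 b j : ZMod r))
          - ∑ j : Fin r, (sub1 b j : ZMod r) := by
        rw [← Finset.sum_sub_distrib]
        exact Finset.sum_congr rfl fun j _ => by ring
    _ = (∑ j : Fin r, ((j : ℕ) : ZMod r) * (sub1 b j : ZMod r))
          - (Nat.multinomial Finset.univ b : ZMod r) := by
        rw [← Nat.cast_sum, sum_sub1 b hb hn]

end Aux

/-- Let `r` be an odd prime, `0 < n < r`, and suppose the multinomial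
coefficients `C(n-1; a_1, …, a_k - 1, …, a_r)`, `1 ≤ k ≤ r`, do not all lie in a single
residue class modulo `r`. Then for each residue `s` modulo `r` the number of distinct
tuples `b` obtained by permuting the entries of `a` with `S(b) ≡ s (mod r)` equals
`(r-1)! / ∏_v m_v!`, where `m_v` is the number of indices `k` with `a_k = v`. -/
theorem stmt13 {r n : ℕ} (hr : Nat.Prime r) (hodd : Odd r)
    (hn : 0 < n) (hnr : n < r)
    (a : Fin r → ℕ) (h : ∑ i, a i = n)
    (hres : ¬ ∀ k l : Fin r, sub1 a k ≡ sub1 a l [MOD r]) :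
    ∀ s : ℕ, s < r →
      ((Finset.image (fun π : Equiv.Perm (Fin r) => a ∘ π) Finset.univ).filter
          (fun b => S b % r = s)).card
        = Nat.factorial (r - 1) /
            ∏ v ∈ Finset.image a Finset.univ,
              Nat.factorial ((Finset.univ.filter (fun k : Fin r => a k = v)).card) := by
  classical
  haveI : Fact (Nat.Prime r) := ⟨hr⟩
  haveI : NeZero r := ⟨hr.pos.ne'⟩
  set T : Finset (Fin r → ℕ) :=
    Finset.image (fun π : Equiv.Perm (Fin r) => a ∘ π) Finset.univ with hT
  set P : ℕ := ∏ v ∈ Finset.image a Finset.univ,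
      Nat.factorial ((Finset.univ.filter (fun k : Fin r => a k = v)).card) with hP
  have hPpos : 0 < P := Finset.prod_pos fun v _ => Nat.factorial_pos _
  -- properties of members of T
  have hmem : ∀ b ∈ T, (∑ i, b i = n) ∧ Nat.multinomial univ b = Nat.multinomial univ a := by
    intro b hb
    rw [hT, Finset.mem_image] at hb
    obtain ⟨π, -, rfl⟩ := hb
    exact ⟨by rw [← h]; exact Equiv.sum_comp π a, multinomial_comp a π⟩
  set μ : ZMod r := (Nat.multinomial Finset.univ a : ZMod r) with hμ
  have hμ0 : μ ≠ 0 := by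
    rw [hμ, Ne, ZMod.natCast_eq_zero_iff]
    intro hdvd
    have hspec := Nat.multinomial_spec (s := (univ : Finset (Fin r))) a
    have h2 : r ∣ n.factorial := by
      rw [← h, ← hspec]
      exact Dvd.dvd.mul_left hdvd _
    have := (Nat.Prime.dvd_factorial hr).1 h2
    omega
  set c : Equiv.Perm (Fin r) := Equiv.addRight (1 : Fin r) with hc
  have hrot : ∀ (e : Equiv.Perm (Fin r)), ∀ b ∈ T, b ∘ ⇑e ∈ T := by
    intro e b hb
    rw [hT, Finset.mem_image] at hb ⊢
    obtain ⟨π, -, rfl⟩ := hb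
    exact ⟨π * e, Finset.mem_univ _, rfl⟩
  have hshift : ∀ b ∈ T, ((S (b ∘ ⇑c) : ℕ) : ZMod r) = (S b : ZMod r) - μ := by
    intro b hb
    rw [hc, S_shift b (hmem b hb).1 hn, (hmem b hb).2, hμ]
  -- the counting function
  set N : ZMod r → ℕ := fun s => (T.filter (fun b => ((S b : ℕ) : ZMod r) = s)).card with hNdef
  have hstep : ∀ s, N s = N (s - μ) := by
    intro s
    apply Finset.card_nbij (fun b => b ∘ ⇑c)
    · intro b hb
      rw [Finset.mem_coe, Finset.mem_filter] at hb ⊢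
      exact ⟨hrot c b hb.1, by rw [hshift b hb.1, hb.2]⟩
    · intro b1 _ b2 _ heq
      funext i
      have := congrFun heq (c.symm i)
      simpa using this
    · intro t ht
      simp only [Finset.coe_filter, Set.mem_setOf_eq] at ht
      refine ⟨t ∘ ⇑c.symm, ?_, ?_⟩
      · have htT : t ∘ ⇑c.symm ∈ T := hrot c.symm t ht.1
        have hcomp : (t ∘ ⇑c.symm) ∘ ⇑c = t := by
          funext i; simp
        simp only [Finset.coe_filter, Set.mem_setOf_eq]
        refine ⟨htT, ?_⟩
        have := hshift (t ∘ ⇑c.symm) htT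
        rw [hcomp, ht.2] at this
        have h5 : ((S (t ∘ ⇑c.symm) : ℕ) : ZMod r) = s := by
          have := congrArg (fun x => x + μ) this
          simpa using this.symm
        exact h5
      · funext i; simp
  have hconst : ∀ s t : ZMod r, N s = N t := by
    have key : ∀ (m : ℕ) (s : ZMod r), N s = N (s - m * μ) := by
      intro m
      induction m with
      | zero => intro s; simp
      | succ m ih =>
        intro s
        rw [ih s, hstep (s - m * μ)]
        congr 1
        push_cast
        ring
    intro s t
    have hk := key (((s - t) * μ⁻¹).val) s
    rwa [ZMod.natCast_rightInverse ((s - t) * μ⁻¹), mul_assoc,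
      inv_mul_cancel₀ hμ0, mul_one, sub_sub_cancel] at hk
  have hcardT : T.card = r * N 0 := by
    rw [Finset.card_eq_sum_card_fiberwise
      (f := fun b => ((S b : ℕ) : ZMod r)) (t := Finset.univ) (fun b _ => Finset.mem_univ _)]
    rw [Finset.sum_congr rfl (fun s _ => (hconst s 0 : N s = N 0)),
      Finset.sum_const, Finset.card_univ, ZMod.card, smul_eq_mul]
  -- stabilizer count
  have hstab : (Finset.univ.filter (fun σ : Equiv.Perm (Fin r) => a ∘ ⇑σ = a)).card = P := by
    rw [← Fintype.card_subtype, DomMulAct.stabilizer_card' a, hP]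
    exact Finset.prod_congr rfl fun v _ => by rw [Fintype.card_subtype]
  have hfiber : T.card * P = r.factorial := by
    have h1 : (Finset.univ : Finset (Equiv.Perm (Fin r))).card
        = ∑ b ∈ T, (Finset.univ.filter (fun π : Equiv.Perm (Fin r) => a ∘ ⇑π = b)).card :=
      Finset.card_eq_sum_card_fiberwise (fun π _ => Finset.mem_image_of_mem _ (Finset.mem_univ π))
    have h2 : ∀ b ∈ T,
        (Finset.univ.filter (fun π : Equiv.Perm (Fin r) => a ∘ ⇑π = b)).card = P := by
      intro b hb
      rw [hT, Finset.mem_image] at hb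
      obtain ⟨π₀, -, rfl⟩ := hb
      rw [← hstab]
      apply Finset.card_nbij' (fun π => π * π₀⁻¹) (fun σ => σ * π₀)
      · intro π hπ
        rw [Finset.mem_coe, Finset.mem_filter] at hπ ⊢
        refine ⟨Finset.mem_univ _, ?_⟩
        funext i
        have := congrFun hπ.2 (π₀⁻¹ i)
        simpa using this
      · intro σ hσ
        rw [Finset.mem_coe, Finset.mem_filter] at hσ ⊢
        refine ⟨Finset.mem_univ _, ?_⟩
        funext i
        have := congrFun hσ.2 (π₀ i)
        simpa using this
      · intro π _; group
      · intro σ _; group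
    rw [Finset.card_univ, Fintype.card_perm, Fintype.card_fin] at h1
    calc T.card * P = ∑ _b ∈ T, P := by rw [Finset.sum_const, smul_eq_mul]
      _ = ∑ b ∈ T, (Finset.univ.filter (fun π : Equiv.Perm (Fin r) => a ∘ ⇑π = b)).card :=
          Finset.sum_congr rfl fun b hb => (h2 b hb).symm
      _ = r.factorial := h1.symm
  have hNP : (r - 1).factorial = N 0 * P := by
    have hmul : r * (N 0 * P) = r * (r - 1).factorial := by
      rw [← mul_assoc, ← hcardT, hfiber, Nat.mul_factorial_pred hr.pos.ne']
    exact (Nat.eq_of_mul_eq_mul_left hr.pos hmul).symm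
  intro s hs
  have hfilter : T.filter (fun b => S b % r = s)
      = T.filter (fun b => ((S b : ℕ) : ZMod r) = ((s : ℕ) : ZMod r)) := by
    apply Finset.filter_congr
    intro b _
    rw [ZMod.natCast_eq_natCast_iff', Nat.mod_eq_of_lt hs]
  rw [hfilter]
  have hNs : (T.filter (fun b => ((S b : ℕ) : ZMod r) = ((s : ℕ) : ZMod r))).card = N 0 :=
    hconst _ 0
  rw [hNs]
  exact (Nat.div_eq_of_eq_mul_left hPpos hNP).symm
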